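/- arXiv:0811.1385 — 5 statements merged into one kernel-verified Lean document; each statement's English description precedes it below -/
import Mathlib

section
/- Let ḡ ∈ PGL₂(ℂ) be an element of infinite order. Then the centralizer of ḡ in PGL₂(ℂ) is abelian. -/
/-!
Lift the commuting elements to `X, G ∈ GL₂(ℂ)`. Commuting in `PGL₂` means `X G X⁻¹ = c G`;
taking determinants gives `c = ±1`, and `c = -1` forces `tr G = 0`, hence `G² = -det G` is
scalar and `ḡ² = 1`. So for `ḡ` of infinite order every element of the centralizer lifts to
a matrix commuting with the non-scalar matrix `G`. Such matrices lie in the commutative algebra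
spanned by `1` and `G`, because the commutation equations say precisely that the traceless parts
of `X` and `G` are parallel.
-/

/-- `PGL₂(ℂ)`: the quotient of `GL₂(ℂ)` by its center (the scalar matrices). -/
abbrev PGL2C : Type := GL (Fin 2) ℂ ⧸ Subgroup.center (GL (Fin 2) ℂ)

open Matrix

theorem exists_smul_eq_of_crossProduct_eq_zero {F : Type*} [Field F] {u v : Fin 3 → F}
    (hu : u ≠ 0) (h : u ⨯₃ v = 0) : ∃ a : F, a • u = v := by
  by_contra! hne
  exact crossProduct_ne_zero_iff_linearIndependent.mpr
    ((LinearIndependent.pair_iff' hu).mpr hne) h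

namespace Matrix

section FinTwo

variable {K : Type*} [Field K]

theorem exists_eq_scalar_add_smul_of_commute {G X : Matrix (Fin 2) (Fin 2) K}
    (hG : G ∉ Set.range (scalar (Fin 2))) (h : Commute X G) :
    ∃ a b : K, X = scalar (Fin 2) a + b • G := by
  -- `(M 0 0 - M 1 1, M 0 1, M 1 0)` are coordinates of the traceless part of `M`.
  have hu : ![G 0 0 - G 1 1, G 0 1, G 1 0] ≠ 0 := by
    intro h0
    simp only [cons_eq_zero_iff, sub_eq_zero, zero_empty, and_true] at h0
    exact hG ⟨G 1 1, by ext i j; fin_cases i <;> fin_cases j <;> simp [h0]⟩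
  have hcross : ![G 0 0 - G 1 1, G 0 1, G 1 0] ⨯₃ ![X 0 0 - X 1 1, X 0 1, X 1 0] = 0 := by
    obtain ⟨⟨h00, h01⟩, h10, -⟩ := by
      simpa only [Fin.forall_fin_two, mul_apply, Fin.sum_univ_two] using congrFun₂ h.eq
    simp only [cross_apply, cons_val, cons_eq_zero_iff, zero_empty, and_true]
    exact ⟨by linear_combination -h00, by linear_combination -h10, by linear_combination -h01⟩
  obtain ⟨b, hb⟩ := exists_smul_eq_of_crossProduct_eq_zero hu hcross
  obtain ⟨h0, h1, h2⟩ := by simpa [funext_iff, Fin.forall_fin_succ] using hb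
  refine ⟨X 1 1 - b * G 1 1, b, ?_⟩
  ext i j
  fin_cases i <;> fin_cases j <;> simp [← h1, ← h2]
  linear_combination -h0

theorem commute_of_commute_of_commute_of_notMem_range_scalar
    {G X Y : Matrix (Fin 2) (Fin 2) K} (hG : G ∉ Set.range (scalar (Fin 2)))
    (hX : Commute X G) (hY : Commute Y G) : Commute X Y := by
  obtain ⟨a, b, rfl⟩ := exists_eq_scalar_add_smul_of_commute hG hX
  obtain ⟨c, d, rfl⟩ := exists_eq_scalar_add_smul_of_commute hG hY
  have hscalar (r : K) (M : Matrix (Fin 2) (Fin 2) K) : Commute (scalar (Fin 2) r) M :=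
    scalar_commute r (Commute.all r) M
  exact (hscalar a _).add_left <|
    (hscalar c _).symm.add_right <| ((Commute.refl G).smul_left b).smul_right d

end FinTwo

theorem sq_mem_range_scalar_of_trace_eq_zero {R : Type*} [CommRing R] [Nontrivial R]
    {M : Matrix (Fin 2) (Fin 2) R} (h : M.trace = 0) : M ^ 2 ∈ Set.range (scalar (Fin 2)) := by
  refine ⟨-M.det, ?_⟩
  have := M.aeval_self_charpoly
  rw [charpoly_fin_two, h] at this
  simp only [map_zero, zero_mul, sub_zero, map_add, map_pow, Polynomial.aeval_X,
    Polynomial.aeval_C] at this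
  rw [map_neg, neg_eq_iff_add_eq_zero, add_comm]
  exact this

theorem trace_eq_zero_of_mul_eq_neg_mul {n K : Type*} [Fintype n] [DecidableEq n] [Field K]
    [NeZero (2 : K)] {X : GL n K} {G : Matrix n n K} (h : X.val * G = -(G * X.val)) :
    G.trace = 0 := by
  have hconj : trace G = -trace G := by
    calc trace G = trace (X.val * G * (X⁻¹ : GL n K).val) := (trace_units_conj X G).symm
      _ = -trace G := by
        rw [h, neg_mul, trace_neg, mul_assoc, ← Units.val_mul, mul_inv_cancel, Units.val_one,
          mul_one]
  have : (2 : K) * trace G = 0 := by linear_combination hconj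
  exact (mul_eq_zero.mp this).resolve_left (NeZero.ne 2)

namespace GeneralLinearGroup

section CommRing

variable {n R : Type*} [Fintype n] [DecidableEq n] [CommRing R]

theorem exists_mul_eq_smul_mul_of_commute_mk {X G : GL n R}
    (h : Commute (X : GL n R ⧸ Subgroup.center (GL n R)) G) :
    ∃ c : R, X.val * G.val = c • (G.val * X.val) := by
  have hmem : (G * X)⁻¹ * (X * G) ∈ Subgroup.center (GL n R) :=
    QuotientGroup.eq.mp (by simpa using h.eq.symm)
  rw [center_eq_range_scalar] at hmem
  obtain ⟨u, hu⟩ := hmem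
  refine ⟨u, ?_⟩
  have : X * G = G * X * scalar n u := by rw [hu]; group
  rw [← Units.val_mul, this]
  simp [smul_eq_mul_diagonal]

theorem pow_card_eq_one_of_mul_eq_smul_mul {X G : GL n R} {c : R}
    (h : X.val * G.val = c • (G.val * X.val)) : c ^ Fintype.card n = 1 := by
  have hdet := congrArg Matrix.det h
  rw [det_smul, det_mul, det_mul, mul_comm (Matrix.det G.val)] at hdet
  have hunit : IsUnit (Matrix.det X.val * Matrix.det G.val) :=
    (X.isUnit.map detMonoidHom).mul (G.isUnit.map detMonoidHom)
  exact hunit.mul_eq_right.mp hdet.symm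

end CommRing

theorem commute_val_or_sq_eq_one_of_commute_mk {K : Type*} [Field K] [NeZero (2 : K)]
    {X G : GL (Fin 2) K}
    (h : Commute (X : GL (Fin 2) K ⧸ Subgroup.center (GL (Fin 2) K)) G) :
    Commute X.val G.val ∨ (G : GL (Fin 2) K ⧸ Subgroup.center (GL (Fin 2) K)) ^ 2 = 1 := by
  obtain ⟨c, hc⟩ := exists_mul_eq_smul_mul_of_commute_mk h
  have hc2 : c ^ 2 = 1 := by simpa using pow_card_eq_one_of_mul_eq_smul_mul hc
  rcases sq_eq_one_iff.mp hc2 with rfl | rfl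
  · left
    rwa [one_smul] at hc
  · right
    have htrace := trace_eq_zero_of_mul_eq_neg_mul (by simpa using hc)
    rw [← QuotientGroup.mk_pow, QuotientGroup.eq_one_iff, mem_center_iff_val_mem_range_scalar]
    simpa using sq_mem_range_scalar_of_trace_eq_zero htrace

end GeneralLinearGroup

end Matrix

open Matrix.GeneralLinearGroup in
/-- The centralizer in `PGL₂(ℂ)` of an element of infinite order
is abelian. -/
theorem centralizer_abelian_PGL2C_of_infiniteOrder (g : PGL2C)
    (hg : ¬ IsOfFinOrder g) :
    ∀ x ∈ Subgroup.centralizer ({g} : Set PGL2C),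
      ∀ y ∈ Subgroup.centralizer ({g} : Set PGL2C), x * y = y * x := by
  intro x hx y hy
  obtain ⟨G, rfl⟩ := QuotientGroup.mk_surjective g
  obtain ⟨X, rfl⟩ := QuotientGroup.mk_surjective x
  obtain ⟨Y, rfl⟩ := QuotientGroup.mk_surjective y
  have hG : G.val ∉ Set.range (Matrix.scalar (Fin 2)) := fun hscalar ↦ hg <| by
    rw [(QuotientGroup.eq_one_iff G).mpr (mem_center_iff_val_mem_range_scalar.mpr hscalar)]
    exact IsOfFinOrder.one
  have hG2 : (G : PGL2C) ^ 2 ≠ 1 := fun h ↦ hg (isOfFinOrder_iff_pow_eq_one.mpr ⟨2, two_pos, h⟩)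
  have hXG := (commute_val_or_sq_eq_one_of_commute_mk
    (Subgroup.mem_centralizer_singleton_iff.mp hx)).resolve_right hG2
  have hYG := (commute_val_or_sq_eq_one_of_commute_mk
    (Subgroup.mem_centralizer_singleton_iff.mp hy)).resolve_right hG2
  exact ((commute_of_commute_of_commute_of_notMem_range_scalar hG hXG hYG).units_of_val.map
    (QuotientGroup.mk' _)).eq
end

section
/- PGL₂(ℂ) does not contain a subgroup isomorphic to the generalized dihedral group; that is, there is no injective group homomorphism from the presented group ⟨x, y ∣ x² = y²⟩ into PGL₂(ℂ). -/
/-!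
Lift `x, y ∈ PGL₂(K)` with `x² = y² ≠ 1` to `g, h ∈ GL₂(K)`. Then `g²` is not scalar, and both `g`
and `h` commute with it, since `h² = g² z` with `z` central. A non-scalar endomorphism `f` of a
plane has a cyclic vector `v`, so its centralizer is `K + K f`, which is commutative; hence
`xy = yx`. In `⟨x, y ∣ x² = y²⟩`, on the other hand, `x² ≠ 1` and `xy ≠ yx`, as the quotient map
onto the quaternion group shows.
-/

/-- The generalized dihedral group `⟨x, y ∣ x² = y²⟩`, presented with the single
relator `x²y⁻²`. -/
abbrev GenDihedral : Type :=
  PresentedGroup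
    ({FreeGroup.of true ^ 2 * (FreeGroup.of false ^ 2)⁻¹} : Set (FreeGroup Bool))

namespace Module.End

variable {K V : Type*} [Field K] [AddCommGroup V] [Module K V]

theorem exists_eq_smul_one_add_smul_of_commute (hV : Module.finrank K V = 2) {f g : End K V}
    (hf : ∀ a : K, f ≠ a • 1) (hgf : Commute g f) : ∃ p q : K, g = p • 1 + q • f := by
  obtain ⟨v, hv⟩ : ∃ v, LinearIndependent K ![v, f v] := by
    by_contra! h
    obtain ⟨a, ha⟩ := LinearMap.exists_eq_smul_id_of_forall_notLinearIndependent h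
    exact hf a ha
  let b := basisOfLinearIndependentOfCardEqFinrank hv (by simp [hV])
  have hb : ⇑b = ![v, f v] := coe_basisOfLinearIndependentOfCardEqFinrank hv _
  obtain ⟨p, q, hgv⟩ : ∃ p q : K, g v = p • v + q • f v :=
    ⟨b.repr (g v) 0, b.repr (g v) 1,
      by simpa [Fin.sum_univ_two, hb] using (b.sum_repr (g v)).symm⟩
  refine ⟨p, q, b.ext <| Fin.forall_fin_two.mpr ⟨?_, ?_⟩⟩ <;>
    simp only [hb, Matrix.cons_val_zero, Matrix.cons_val_one, Matrix.cons_val_fin_one]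
  · simpa using hgv
  · calc g (f v) = f (g v) := LinearMap.congr_fun hgf.eq v
      _ = (p • 1 + q • f) (f v) := by simp [hgv]

theorem commute_of_commute_of_commute (hV : Module.finrank K V = 2) {f g₁ g₂ : End K V}
    (hf : ∀ a : K, f ≠ a • 1) (h₁ : Commute g₁ f) (h₂ : Commute g₂ f) : Commute g₁ g₂ := by
  obtain ⟨p, q, rfl⟩ := exists_eq_smul_one_add_smul_of_commute hV hf h₁
  exact ((Commute.one_left g₂).smul_left p).add_left (h₂.symm.smul_left q)

end Module.End

namespace Matrix.GeneralLinearGroup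

variable {K : Type*} [Field K]

theorem commute_of_commute_of_commute {c g₁ g₂ : GL (Fin 2) K}
    (hc : c ∉ Subgroup.center (GL (Fin 2) K)) (h₁ : Commute g₁ c) (h₂ : Commute g₂ c) :
    Commute g₁ g₂ := by
  have hc' : ∀ a : K, toLinAlgEquiv' (c : Matrix (Fin 2) (Fin 2) K) ≠ a • 1 := by
    intro a ha
    refine hc (mem_center_iff_val_mem_range_scalar.mpr ⟨a, toLinAlgEquiv'.injective ?_⟩)
    rw [ha, ← map_one toLinAlgEquiv', ← map_smul, smul_one_eq_diagonal]
    rfl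
  have := Module.End.commute_of_commute_of_commute (by simp) hc'
    (h₁.units_val.map toLinAlgEquiv') (h₂.units_val.map toLinAlgEquiv')
  exact (this.of_map toLinAlgEquiv'.injective).units_of_val

end Matrix.GeneralLinearGroup

open Matrix.GeneralLinearGroup in
theorem commute_of_sq_eq_sq_of_sq_ne_one {K : Type*} [Field K]
    {x y : GL (Fin 2) K ⧸ Subgroup.center (GL (Fin 2) K)} (hxy : x ^ 2 = y ^ 2) (hx : x ^ 2 ≠ 1) :
    Commute x y := by
  obtain ⟨g, rfl⟩ := QuotientGroup.mk_surjective x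
  obtain ⟨h, rfl⟩ := QuotientGroup.mk_surjective y
  obtain ⟨z, hz, hhz⟩ : ∃ z ∈ Subgroup.center (GL (Fin 2) K), h ^ 2 * z = g ^ 2 :=
    (QuotientGroup.mk'_eq_mk' _).mp hxy.symm
  have hg : g ^ 2 ∉ Subgroup.center (GL (Fin 2) K) := fun hg =>
    hx ((QuotientGroup.eq_one_iff _).mpr hg)
  have hh : Commute h (g ^ 2) :=
    hhz ▸ (Commute.self_pow h 2).mul_right (Subgroup.mem_center_iff.mp hz h)
  exact (commute_of_commute_of_commute hg (Commute.self_pow g 2) hh).map (QuotientGroup.mk' _)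

namespace GenDihedral

theorem of_true_sq_eq_of_false_sq : (.of true : GenDihedral) ^ 2 = .of false ^ 2 := by
  have := PresentedGroup.mk_eq_mk_of_mul_inv_mem
    (Set.mem_singleton (FreeGroup.of true ^ 2 * (FreeGroup.of false ^ 2)⁻¹))
  rwa [map_pow, map_pow] at this

/-- `x ↦ i`, `y ↦ j`: here `i² = j² = -1 ≠ 1` and `ij ≠ ji`. -/
def toQuaternionGroup : GenDihedral →* QuaternionGroup 2 :=
  PresentedGroup.toGroup (f := fun t => if t then .a 1 else .xa 0) <| by
    rintro r rfl
    decide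

theorem of_true_sq_ne_one : (.of true : GenDihedral) ^ 2 ≠ 1 :=
  ne_one_of_map (f := toQuaternionGroup) <| by
    rw [map_pow, toQuaternionGroup, PresentedGroup.toGroup.of]
    decide

theorem not_commute_of_true_of_false : ¬ Commute (.of true : GenDihedral) (.of false) := by
  intro h
  have := (h.map toQuaternionGroup).eq
  rw [toQuaternionGroup, PresentedGroup.toGroup.of, PresentedGroup.toGroup.of] at this
  revert this
  decide

end GenDihedral

/-- `PGL₂(ℂ)` contains no subgroup isomorphic to the generalized
dihedral group `⟨x, y ∣ x² = y²⟩`: there is no injective homomorphism from it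
into `PGL₂(ℂ)`. -/
theorem no_genDihedral_subgroup_PGL2C (φ : GenDihedral →* PGL2C) :
    ¬ Function.Injective φ := by
  intro hφ
  have hsq : φ (.of true) ^ 2 = φ (.of false) ^ 2 := by
    rw [← map_pow, ← map_pow, GenDihedral.of_true_sq_eq_of_false_sq]
  have hsq_ne : φ (.of true) ^ 2 ≠ 1 := by
    rw [← map_pow]
    exact (map_ne_one_iff φ hφ).mpr GenDihedral.of_true_sq_ne_one
  exact GenDihedral.not_commute_of_true_of_false
    ((commute_of_sq_eq_sq_of_sq_ne_one hsq hsq_ne).of_map hφ)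
end

section
/- Let G be a LERF group, H a finitely generated subgroup of G, and K a finite-index subgroup of H. Then there exists a finite-index subgroup U of G with U ∩ H = K. (The profinite topology on G induces the full profinite topology on every finitely generated subgroup of G.) -/
/-- A group `G` is LERF (subgroup separable) if every finitely generated
subgroup is separable: any element outside it is separated from it in some
finite quotient. -/
def LERF (G : Type) [Group G] : Prop :=
  ∀ H : Subgroup G, H.FG → ∀ g : G, g ∉ H →
    ∃ (Q : Type) (_ : Group Q) (_ : Finite Q) (φ : G →* Q),
      φ g ∉ Subgroup.map φ H

/-!
Since `K` has finite index in the finitely generated group `H`, it is finitely generated by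
Schreier's lemma, so by LERF each of the finitely many coset representatives of `H ⧸ K` lying
outside `K` can be kept out of some finite-index subgroup of `G` containing `K`. The intersection
`U` of these subgroups has finite index and contains `K`, and `U ∩ H = K` because any element of
`U ∩ H` lies in `U` together with the representative of its coset.
-/

theorem Subgroup.FG.map {G G' : Type*} [Group G] [Group G'] {P : Subgroup G} (h : P.FG)
    (f : G →* G') : (P.map f).FG :=
  (Subgroup.fg_iff_submonoid_fg _).2 (((Subgroup.fg_iff_submonoid_fg P).1 h).map f)

theorem Subgroup.le_of_forall_out_mem {H : Type*} [Group H] {K W : Subgroup H} (hKW : K ≤ W)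
    (hout : ∀ q : H ⧸ K, q.out ∈ W → q.out ∈ K) : W ≤ K := by
  intro w hw
  obtain ⟨k, hk⟩ := QuotientGroup.mk_out_eq_mul K w
  have hout_mem : (w : H ⧸ K).out ∈ W := hk ▸ W.mul_mem hw (hKW k.2)
  have hw_eq : w = (w : H ⧸ K).out * (k : H)⁻¹ := by rw [hk]; group
  exact hw_eq ▸ K.mul_mem (hout _ hout_mem) (K.inv_mem k.2)

namespace LERF

variable {G : Type} [Group G]

theorem exists_finiteIndex_le_notMem (hG : LERF G) {L : Subgroup G} (hL : L.FG) {g : G}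
    (hg : g ∉ L) : ∃ V : Subgroup G, V.FiniteIndex ∧ L ≤ V ∧ g ∉ V := by
  obtain ⟨Q, _, _, φ, hφ⟩ := hG L hL g hg
  refine ⟨(L.map φ).comap φ, ?_, Subgroup.le_comap_map φ L, hφ⟩
  exact Subgroup.finiteIndex_of_le (MonoidHom.ker_le_comap φ _)

theorem exists_finiteIndex_le_forall_notMem (hG : LERF G) {L : Subgroup G} (hL : L.FG)
    {ι : Type*} [Finite ι] {g : ι → G} (hg : ∀ i, g i ∉ L) :
    ∃ V : Subgroup G, V.FiniteIndex ∧ L ≤ V ∧ ∀ i, g i ∉ V := by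
  choose V hVfin hLV hgV using fun i => hG.exists_finiteIndex_le_notMem hL (hg i)
  refine ⟨⨅ i, V i, Subgroup.finiteIndex_iInf hVfin, le_iInf hLV, fun i hi => ?_⟩
  exact hgV i (Subgroup.mem_iInf.1 hi i)

end LERF

/-- in a LERF group `G`, for any finitely generated subgroup `H`
and any finite-index subgroup `K` of `H`, there is a finite-index subgroup `U`
of `G` with `U ∩ H = K`; i.e. the profinite topology of `G` induces the full
profinite topology on finitely generated subgroups. -/
theorem lerf_induces_full_profinite_topology (G : Type) [Group G]
    (hG : LERF G) (H : Subgroup G) (hH : H.FG) (K : Subgroup H)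
    (hK : K.FiniteIndex) :
    ∃ U : Subgroup G, U.FiniteIndex ∧ Subgroup.comap H.subtype U = K := by
  have : Group.FG H := (Group.fg_iff_subgroup_fg H).2 hH
  have hKfg : (K.map H.subtype).FG :=
    ((Group.fg_iff_subgroup_fg K).1 (Subgroup.fg_of_index_ne_zero K)).map H.subtype
  have hmem (h : H) : (h : G) ∈ K.map H.subtype ↔ h ∈ K :=
    Subgroup.mem_map_iff_mem H.subtype_injective
  obtain ⟨U, hUfin, hKU, hU⟩ := hG.exists_finiteIndex_le_forall_notMem hKfg
    (ι := {q : H ⧸ K // q.out ∉ K}) (g := fun q => (q.1.out : G)) fun q => (hmem _).not.2 q.2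
  have hK_le : K ≤ U.comap H.subtype := fun k hk => hKU ((hmem k).2 hk)
  refine ⟨U, hUfin, le_antisymm (Subgroup.le_of_forall_out_mem hK_le ?_) hK_le⟩
  exact fun q hq => by_contra fun hqK => hU ⟨q, hqK⟩ hq
end

section
/- Let G be a torsion-free group that does not contain a subgroup isomorphic to the generalized dihedral group ⟨x, y ∣ x² = y²⟩. Let H be a finite-index subgroup of G such that: (1) H is conjugacy separable; (2) for each nontrivial h ∈ H, the centralizer C_H(h) is a free abelian group of rank at most 2, i.e., isomorphic to ℤⁿ for some n ≤ 2. Then G is conjugacy separable. -/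
/-- A group is conjugacy separable if non-conjugate elements stay non-conjugate
in some finite quotient. -/
def ConjSeparable (G : Type) [Group G] : Prop :=
  ∀ x y : G, ¬ IsConj x y →
    ∃ (Q : Type) (_ : Group Q) (_ : Finite Q) (φ : G →* Q), ¬ IsConj (φ x) (φ y)

/-!
Let `e` be the index of the normal core of `H`, so that `g ^ e` lies in it for every `g ∈ G`.

For `1 ≠ c ∈ H` the centralizer `C_G(c)` is torsion-free and virtually `ℤⁿ` with `n ≤ 2`.
By Schur's theorem the centralizer `A` of the normal core of that `ℤⁿ` is an abelian, normal,
self-centralizing subgroup of finite index. If `A` were proper, some `d ∉ A` would have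
`d ^ p ∈ A` for a prime `p` and act nontrivially on `A`, fixing `d ^ p ≠ 1`. For `p = 2`
this yields a copy of `⟨x, y ∣ x² = y²⟩`. For odd `p` it yields an integer matrix of size at
most `2` and odd order that fixes a nonzero vector. Such a matrix is unipotent of finite order,
hence trivial. So `C_G(c)` is abelian, and roots in `G` are unique.

So if `x` and `y` are not conjugate, neither are `x ^ e` and `y ^ e`. Separating `x ^ e` in a
finite quotient of `H` from the conjugates of `y ^ e` by coset representatives of `H` gives a
finite quotient of `G` in which `x ^ e` and `y ^ e`, hence `x` and `y`, are not conjugate.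
-/

open Subgroup

section TorsionFree

variable {G : Type*} [Group G]

theorem eq_one_of_zpow_eq_one (htf : ∀ g : G, g ≠ 1 → ¬IsOfFinOrder g) {g : G} {k : ℤ}
    (hk : k ≠ 0) (h : g ^ k = 1) : g = 1 := by
  by_contra hg
  exact htf g hg (isOfFinOrder_iff_zpow_eq_one.2 ⟨k, hk, h⟩)

theorem eq_one_of_pow_eq_one (htf : ∀ g : G, g ≠ 1 → ¬IsOfFinOrder g) {g : G} {n : ℕ}
    (hn : n ≠ 0) (h : g ^ n = 1) : g = 1 :=
  eq_one_of_zpow_eq_one htf (k := n) (by exact_mod_cast hn) (by rwa [zpow_natCast])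

theorem Subgroup.isTorsionFree (htf : ∀ g : G, g ≠ 1 → ¬IsOfFinOrder g) (K : Subgroup G) :
    ∀ g : K, g ≠ 1 → ¬IsOfFinOrder g := fun g hg hfin =>
  htf g (by simpa using hg) (Submonoid.isOfFinOrder_coe.2 hfin)

/-- Schur: the transfer `g ↦ g ^ [F : Z(F)]` into the centre is injective, and it identifies
`a * b` with its conjugate `b * a`. -/
theorem commute_of_finiteIndex_center {F : Type*} [Group F] [(center F).FiniteIndex]
    (htf : ∀ g : F, g ≠ 1 → ¬IsOfFinOrder g) (a b : F) : Commute a b := by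
  have hinj : Function.Injective (MonoidHom.transferCenterPow F) := by
    refine (injective_iff_map_eq_one _).2 fun g hg => eq_one_of_pow_eq_one htf
      (FiniteIndex.index_ne_zero (H := center F)) ?_
    rw [← MonoidHom.transferCenterPow_apply, hg, OneMemClass.coe_one]
  refine hinj (Subtype.ext ?_)
  have hcen := (center F).pow_index_mem (a * b)
  simp only [MonoidHom.transferCenterPow_apply]
  calc (a * b) ^ (center F).index = a⁻¹ * (a * b) ^ (center F).index * a := by
        rw [mem_center_iff.1 hcen a⁻¹]; group
    _ = (b * a) ^ (center F).index := by
        rw [show b * a = a⁻¹ * (a * b) * a⁻¹⁻¹ by group, conj_pow, inv_inv]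

end TorsionFree

namespace GenDihedral

def x : GenDihedral := PresentedGroup.of true

def y : GenDihedral := PresentedGroup.of false

/-- `a` generates the normal infinite cyclic subgroup of `GenDihedral ≅ ℤ ⋊ ℤ`, on which `x`
acts by inversion. -/
def a : GenDihedral := y * x⁻¹

theorem x_sq_eq_y_sq : x ^ 2 = y ^ 2 := by
  have h := PresentedGroup.one_of_mem
    (rels := {FreeGroup.of true ^ 2 * (FreeGroup.of false ^ 2)⁻¹}) rfl
  simpa [x, y, PresentedGroup.of, mul_inv_eq_one] using h

theorem x_mul_a_mul_x_inv : x * a * x⁻¹ = a⁻¹ := by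
  calc x * a * x⁻¹ = x * y * (x ^ 2)⁻¹ := by rw [a]; group
    _ = a⁻¹ := by rw [x_sq_eq_y_sq, a]; group

theorem x_mul_a_zpow (i : ℤ) : x * a ^ i = a ^ (-i) * x := by
  rw [zpow_neg, ← inv_zpow, ← x_mul_a_mul_x_inv, conj_zpow]; group

theorem x_inv_mul_a_zpow (i : ℤ) : x⁻¹ * a ^ i = a ^ (-i) * x⁻¹ := by
  calc x⁻¹ * a ^ i = x⁻¹ * (x * a ^ (-i)) * x⁻¹ := by rw [x_mul_a_zpow, neg_neg]; group
    _ = a ^ (-i) * x⁻¹ := by group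

theorem exists_eq_a_zpow_mul_x_zpow (g : GenDihedral) : ∃ i j : ℤ, g = a ^ i * x ^ j := by
  have hg : g ∈ closure (Set.range PresentedGroup.of) := by
    rw [PresentedGroup.closure_range_of]; trivial
  have hy : y = a * x := by rw [a]; group
  induction hg using closure_induction_left with
  | one => exact ⟨0, 0, by simp⟩
  | mul_left s hs g _ ih =>
    obtain ⟨b, rfl⟩ := hs
    obtain ⟨i, j, rfl⟩ := ih
    cases b
    · refine ⟨1 - i, j + 1, ?_⟩
      calc y * (a ^ i * x ^ j) = a * (x * a ^ i) * x ^ j := by rw [hy]; group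
        _ = a ^ (1 - i) * x ^ (j + 1) := by rw [x_mul_a_zpow]; group
    · refine ⟨-i, j + 1, ?_⟩
      calc x * (a ^ i * x ^ j) = (x * a ^ i) * x ^ j := by group
        _ = a ^ (-i) * x ^ (j + 1) := by rw [x_mul_a_zpow]; group
  | inv_mul_cancel s hs g _ ih =>
    obtain ⟨b, rfl⟩ := hs
    obtain ⟨i, j, rfl⟩ := ih
    cases b
    · refine ⟨1 - i, j - 1, ?_⟩
      calc y⁻¹ * (a ^ i * x ^ j) = x⁻¹ * a ^ (i - 1) * x ^ j := by rw [hy]; group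
        _ = a ^ (1 - i) * x ^ (j - 1) := by rw [x_inv_mul_a_zpow]; group
    · refine ⟨-i, j - 1, ?_⟩
      calc x⁻¹ * (a ^ i * x ^ j) = (x⁻¹ * a ^ i) * x ^ j := by group
        _ = a ^ (-i) * x ^ (j - 1) := by rw [x_inv_mul_a_zpow]; group

/-- The embedding is `x ↦ d`, `y ↦ v * d`. -/
theorem exists_injective_hom {D : Type*} [Group D] (htf : ∀ g : D, g ≠ 1 → ¬IsOfFinOrder g)
    {d v : D} (hv : v ≠ 1) (hdv : d * v * d⁻¹ = v⁻¹) :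
    ∃ φ : GenDihedral →* D, Function.Injective φ := by
  have hrel : ∀ r ∈ ({FreeGroup.of true ^ 2 * (FreeGroup.of false ^ 2)⁻¹} :
      Set (FreeGroup Bool)), FreeGroup.lift (fun b => cond b d (v * d)) r = 1 := by
    rintro r rfl
    suffices (v * d) ^ 2 = d ^ 2 by simp [this]
    calc (v * d) ^ 2 = v * (d * v * d⁻¹) * d ^ 2 := by rw [sq]; group
      _ = d ^ 2 := by rw [hdv]; group
  set φ := PresentedGroup.toGroup hrel
  have hφx : φ x = d := PresentedGroup.toGroup.of hrel
  have hφa : φ a = v := by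
    rw [a, map_mul, map_inv, hφx, y, PresentedGroup.toGroup.of hrel, cond_false,
      mul_inv_cancel_right]
  refine ⟨φ, (injective_iff_map_eq_one φ).2 fun g hg => ?_⟩
  obtain ⟨i, j, rfl⟩ := exists_eq_a_zpow_mul_x_zpow g
  rw [map_mul, map_zpow, map_zpow, hφa, hφx] at hg
  have hg' : v ^ (-i) * d ^ j = 1 := by
    calc v ^ (-i) * d ^ j = d * (v ^ i * d ^ j) * d⁻¹ := by
          rw [zpow_neg, ← inv_zpow, ← hdv, conj_zpow]; group
      _ = 1 := by rw [hg]; group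
  have hi : i = 0 := by
    by_contra hi
    refine hv (eq_one_of_zpow_eq_one htf (k := i + i) (by omega) ?_)
    rw [zpow_add]
    nth_rw 1 [mul_right_cancel (hg.trans hg'.symm)]
    rw [← zpow_add, neg_add_cancel, zpow_zero]
  rw [hi, zpow_zero, one_mul] at hg
  have hd : d ≠ 1 := by
    rintro rfl
    refine hv (eq_one_of_pow_eq_one htf two_ne_zero ?_)
    rw [sq, ← inv_mul_cancel v, ← hdv]; group
  have hj : j = 0 := by
    by_contra hj
    exact hd (eq_one_of_zpow_eq_one htf hj hg)
  simp [hi, hj]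

theorem exists_injective_hom_of_commute_sq {D : Type*} [Group D]
    (htf : ∀ g : D, g ≠ 1 → ¬IsOfFinOrder g) {d a : D} (hcomm : Commute (d ^ 2) a)
    (hne : d * a * d⁻¹ ≠ a) : ∃ φ : GenDihedral →* D, Function.Injective φ := by
  refine exists_injective_hom htf (d := d) (v := a⁻¹ * (d * a * d⁻¹))
    (fun h => hne (inv_mul_eq_one.1 h).symm) ?_
  calc d * (a⁻¹ * (d * a * d⁻¹)) * d⁻¹
      = d * a⁻¹ * d⁻¹ * (d ^ 2 * a) * (d ^ 2)⁻¹ := by group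
    _ = (a⁻¹ * (d * a * d⁻¹))⁻¹ := by rw [hcomm.eq]; group

end GenDihedral

theorem Matrix.fin_two_eq_one_of_pow_eq_one {p : ℕ} (hp : Odd p)
    {T : Matrix (Fin 2) (Fin 2) ℤ} (hT : T ^ p = 1) (hfix : (T - 1).det = 0) : T = 1 := by
  have hdet : T.det = 1 := by
    have h := (pow_eq_one_iff_of_ne_zero hp.pos.ne').1
      (by rw [← det_pow, hT, det_one] : T.det ^ p = 1)
    exact h.resolve_right fun h' => (Nat.not_even_iff_odd.2 hp) h'.2
  obtain ⟨N, rfl⟩ : ∃ N, T = 1 + N := ⟨T - 1, by abel⟩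
  rw [add_sub_cancel_left, det_fin_two] at hfix
  rw [det_fin_two] at hdet
  simp only [Fin.isValue, add_apply, one_apply_eq, ne_eq, zero_ne_one, not_false_eq_true,
    one_apply_ne, zero_add, one_ne_zero] at hdet
  -- `T = 1 + N` has trace `2` and determinant `1`, so Cayley–Hamilton gives `N² = 0`.
  have htr : N 0 0 + N 1 1 = 0 := by linear_combination hdet - hfix
  have hN : N * N = 0 := by
    ext i j
    fin_cases i <;> fin_cases j <;>
      simp only [Fin.zero_eta, Fin.mk_one, Fin.isValue, mul_apply, Fin.sum_univ_two, zero_apply]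
    · linear_combination N 0 0 * htr - hfix
    · linear_combination N 0 1 * htr
    · linear_combination N 1 0 * htr
    · linear_combination N 1 1 * htr - hfix
  have hpow : ∀ k : ℕ, (1 + N) ^ k = 1 + (k : ℤ) • N := by
    intro k
    induction k with
    | zero => simp
    | succ k ih =>
      rw [pow_succ, ih]
      simp [mul_add, add_mul, mul_assoc, hN, add_smul, add_assoc]
  have hpN : (p : ℤ) • N = 0 := by simpa [hT] using (hpow p).symm
  rw [(smul_eq_zero.1 hpN).resolve_left (by exact_mod_cast hp.pos.ne'), add_zero]

theorem Matrix.eq_one_of_pow_eq_one_of_det_sub_one_eq_zero {r p : ℕ} (hr : r ≤ 2) (hp : Odd p)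
    {T : Matrix (Fin r) (Fin r) ℤ} (hT : T ^ p = 1) (hfix : (T - 1).det = 0) : T = 1 := by
  interval_cases r
  · exact Subsingleton.elim _ _
  · ext i j
    fin_cases i; fin_cases j
    simpa [sub_eq_zero] using hfix
  · exact fin_two_eq_one_of_pow_eq_one hp hT hfix

theorem Module.End.eq_one_of_pow_eq_one_of_fixed {M : Type*} [AddCommGroup M]
    [Module.Free ℤ M] [Module.Finite ℤ M] (hM : Module.finrank ℤ M ≤ 2) {p : ℕ} (hp : Odd p)
    {σ : Module.End ℤ M} (hσ : σ ^ p = 1) {ζ : M} (hζ : ζ ≠ 0) (hfix : σ ζ = ζ) : σ = 1 := by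
  let b := Module.finBasisOfFinrankEq ℤ M rfl
  apply (LinearMap.toMatrixAlgEquiv b).injective
  rw [map_one]
  refine Matrix.eq_one_of_pow_eq_one_of_det_sub_one_eq_zero hM hp
    (by rw [← map_pow, hσ, map_one]) ?_
  rw [← map_one (LinearMap.toMatrixAlgEquiv b), ← map_sub, ← Matrix.exists_mulVec_eq_zero_iff]
  refine ⟨b.repr ζ, by simpa using hζ, ?_⟩
  exact (LinearMap.toMatrix_mulVec_repr b b (σ - 1) ζ).trans (by simp [hfix])

open scoped IsMulCommutative in
theorem conj_eq_self_of_odd_pow_mem {D : Type*} [Group D]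
    (htf : ∀ g : D, g ≠ 1 → ¬IsOfFinOrder g) {A : Subgroup D} [A.Normal] [IsMulCommutative A]
    {n : ℕ} (hn : n ≤ 2)
    {j : A →* Multiplicative (Fin n → ℤ)} (hj : Function.Injective j) {d : D} (hd : d ≠ 1)
    {p : ℕ} (hp : Odd p) (hdp : d ^ p ∈ A) {a : D} (ha : a ∈ A) : d * a * d⁻¹ = a := by
  let f : Additive A →ₗ[ℤ] Fin n → ℤ := (MonoidHom.toAdditiveLeft j).toIntLinearMap
  have hf : Function.Injective f := hj
  have : Module.Finite ℤ (Additive A) := Module.Finite.of_injective f hf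
  have : Module.IsTorsionFree ℤ (Additive A) := hf.moduleIsTorsionFree f (map_zsmul f)
  have : Module.Free ℤ (Additive A) := Module.free_of_finite_type_torsion_free'
  let σ := Representation.ofMulDistribMulAction (ConjAct D) A (ConjAct.toConjAct d)
  have hσ : σ ^ p = 1 := by
    simp only [σ, ← map_pow]
    ext b
    simp only [Representation.ofMulDistribMulAction_apply_apply, Module.End.one_apply]
    congr 1
    ext
    rw [toMul_ofMul, ConjAct.Subgroup.val_conj_smul, ConjAct.toConjAct_smul,
      setLike_mul_comm hdp b.toMul.2, mul_inv_cancel_right]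
  have hfix : σ (Additive.ofMul ⟨d ^ p, hdp⟩) = Additive.ofMul ⟨d ^ p, hdp⟩ := by
    simp only [σ, Representation.ofMulDistribMulAction_apply_apply]
    congr 1
    ext
    rw [toMul_ofMul, ConjAct.Subgroup.val_conj_smul, ConjAct.toConjAct_smul, ← pow_succ',
      pow_succ, mul_inv_cancel_right]
  have hζ : Additive.ofMul (⟨d ^ p, hdp⟩ : A) ≠ 0 := fun h =>
    hd (eq_one_of_pow_eq_one htf hp.pos.ne' (congrArg Subtype.val (congrArg Additive.toMul h)))
  have hσ1 := Module.End.eq_one_of_pow_eq_one_of_fixed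
    ((LinearMap.finrank_le_finrank_of_injective hf).trans (by simpa using hn)) hp hσ hζ hfix
  have := congrArg (fun b : Additive A => (b.toMul : D))
    (LinearMap.congr_fun hσ1 (Additive.ofMul ⟨a, ha⟩))
  simpa [σ, ConjAct.Subgroup.val_conj_smul, ConjAct.toConjAct_smul] using this

section VirtuallyFreeAbelian

variable {D : Type*} [Group D]

theorem isMulCommutative_centralizer_normalCore (htf : ∀ g : D, g ≠ 1 → ¬IsOfFinOrder g)
    (B : Subgroup D) [B.FiniteIndex] [IsMulCommutative B] :
    IsMulCommutative (centralizer (B.normalCore : Set D)) := by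
  set A := centralizer (B.normalCore : Set D)
  have hcen : B.normalCore.subgroupOf A ≤ center A := fun b hb =>
    mem_center_iff.2 fun g =>
      Subtype.ext (mem_centralizer_iff.1 g.2 b (mem_subgroupOf.1 hb)).symm
  have : (center A).FiniteIndex := finiteIndex_of_le hcen
  exact .of_comm fun a b => commute_of_finiteIndex_center (A.isTorsionFree htf) a b

theorem exists_pow_prime_mem_of_ne_top {A : Subgroup D} [A.Normal] [A.FiniteIndex]
    (hA : A ≠ ⊤) : ∃ d ∉ A, ∃ p, p.Prime ∧ d ^ p ∈ A := by
  have : Nontrivial (D ⧸ A) := QuotientGroup.nontrivial_iff.2 hA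
  obtain ⟨p, hp, hdvd⟩ := Nat.exists_prime_and_dvd (Finite.one_lt_card (α := D ⧸ A)).ne'
  have : Fact p.Prime := ⟨hp⟩
  obtain ⟨q, hq⟩ := exists_prime_orderOf_dvd_card' p hdvd
  obtain ⟨d, rfl⟩ := QuotientGroup.mk_surjective q
  refine ⟨d, fun hd => hp.one_lt.ne' ?_, p, hp, ?_⟩
  · rw [← hq, (QuotientGroup.eq_one_iff d).2 hd, orderOf_one]
  · rw [← QuotientGroup.eq_one_iff, QuotientGroup.mk_pow, ← hq, pow_orderOf_eq_one]

open scoped IsMulCommutative in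
theorem exists_injective_monoidHom_finiteIndex (htf : ∀ g : D, g ≠ 1 → ¬IsOfFinOrder g)
    (A : Subgroup D) [IsMulCommutative A] (B : Subgroup D) [B.FiniteIndex] :
    ∃ j : A →* B, Function.Injective j := by
  let m := B.normalCore.index
  let j := (A.subtype.comp (powMonoidHom m)).codRestrict B
    fun a => B.normalCore_le (B.normalCore.pow_index_mem (a : D))
  refine ⟨j, (injective_iff_map_eq_one j).2 fun a ha => Subtype.ext ?_⟩
  exact eq_one_of_pow_eq_one htf FiniteIndex.index_ne_zero (congrArg Subtype.val ha)

theorem commute_of_finiteIndex_mulEquiv (htf : ∀ g : D, g ≠ 1 → ¬IsOfFinOrder g)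
    (hnd : ∀ φ : GenDihedral →* D, ¬Function.Injective φ) {n : ℕ} (hn : n ≤ 2)
    (B : Subgroup D) [B.FiniteIndex] (ψ : B ≃* Multiplicative (Fin n → ℤ)) (x y : D) :
    Commute x y := by
  have : IsMulCommutative B :=
    .of_comm fun a b => ψ.injective (by rw [map_mul, map_mul, mul_comm])
  set A := centralizer (B.normalCore : Set D)
  have : IsMulCommutative A := isMulCommutative_centralizer_normalCore htf B
  have hB₀A : B.normalCore ≤ A :=
    B.normalCore_le.trans ((le_centralizer B).trans (centralizer_le B.normalCore_le))
  have : A.FiniteIndex := finiteIndex_of_le hB₀A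
  by_contra hxy
  obtain ⟨d, hdA, p, hp, hdp⟩ := exists_pow_prime_mem_of_ne_top (A := A) fun hA =>
    hxy (setLike_mul_comm (hA ▸ mem_top x) (hA ▸ mem_top y))
  obtain ⟨a, ha, hda⟩ : ∃ a ∈ A, d * a * d⁻¹ ≠ a := by
    by_contra! h
    refine hdA (centralizer_le hB₀A (mem_centralizer_iff.2 fun a ha => ?_))
    conv_lhs => rw [← h a ha]
    group
  rcases hp.eq_two_or_odd' with rfl | hodd
  · obtain ⟨φ, hφ⟩ := GenDihedral.exists_injective_hom_of_commute_sq htf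
      (setLike_mul_comm hdp ha) hda
    exact hnd φ hφ
  · obtain ⟨j, hj⟩ := exists_injective_monoidHom_finiteIndex htf A B
    have hd : d ≠ 1 := by rintro rfl; exact hdA A.one_mem
    exact hda (conj_eq_self_of_odd_pow_mem htf hn (j := ψ.toMonoidHom.comp j)
      (ψ.injective.comp hj) hd hodd hdp ha)

end VirtuallyFreeAbelian

section ConjSeparable

variable {G : Type} [Group G]

theorem ConjSeparable.exists_finiteIndex_not_mem (hcs : ConjSeparable G) {u w : G}
    (huw : ¬IsConj u w) :
    ∃ K : Subgroup G, K.FiniteIndex ∧ ∀ g, (g * u * g⁻¹)⁻¹ * w ∉ K := by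
  obtain ⟨Q, _, _, φ, hφ⟩ := hcs u w huw
  refine ⟨φ.ker, inferInstance, fun g hg => hφ (isConj_iff.2 ⟨φ g, ?_⟩)⟩
  rw [← map_inv, ← map_mul, ← map_mul, ← inv_mul_eq_one, ← map_inv, ← map_mul]
  exact hg

theorem exists_hom_not_isConj_of_finiteIndex {u w : G} (K : Subgroup G) [K.FiniteIndex]
    (hK : ∀ g, (g * u * g⁻¹)⁻¹ * w ∉ K) :
    ∃ (Q : Type) (_ : Group Q) (_ : Finite Q) (φ : G →* Q), ¬IsConj (φ u) (φ w) := by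
  refine ⟨G ⧸ K.normalCore, inferInstance, inferInstance, QuotientGroup.mk' _, fun h => ?_⟩
  obtain ⟨c, hc⟩ := isConj_iff.1 h
  obtain ⟨g, rfl⟩ := QuotientGroup.mk'_surjective _ c
  rw [← map_inv, ← map_mul, ← map_mul, QuotientGroup.mk'_apply, QuotientGroup.mk'_apply,
    QuotientGroup.eq] at hc
  exact hK g (K.normalCore_le hc)

/-- To separate `u` from every `g⁻¹ w g` it suffices to separate it, inside `H`, from the
conjugates of `w` by a set of coset representatives of `H`. -/
theorem ConjSeparable.exists_finiteIndex_not_mem_of_finiteIndex {H : Subgroup G}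
    [H.FiniteIndex] (hcs : ConjSeparable H) {u w : G} (hu : u ∈ H) (hw : w ∈ H.normalCore)
    (huw : ¬IsConj u w) :
    ∃ K : Subgroup G, K.FiniteIndex ∧ ∀ g, (g * u * g⁻¹)⁻¹ * w ∉ K := by
  have hws (s : G ⧸ H) : s.out⁻¹ * w * s.out ∈ H :=
    H.normalCore_le (by simpa using H.normalCore_normal.conj_mem w hw s.out⁻¹)
  have hnc (s : G ⧸ H) : ¬IsConj (⟨u, hu⟩ : H) ⟨_, hws s⟩ := fun h => by
    obtain ⟨c, hc⟩ := isConj_iff.1 h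
    refine huw (isConj_iff.2 ⟨s.out * c, ?_⟩)
    have hc' : c * u * (c : G)⁻¹ = s.out⁻¹ * w * s.out := by
      simpa using congrArg Subtype.val hc
    calc s.out * c * u * (s.out * c)⁻¹ = s.out * ((c : G) * u * (c : G)⁻¹) * s.out⁻¹ := by
          group
      _ = w := by rw [hc']; group
  choose K hK hKuw using fun s => hcs.exists_finiteIndex_not_mem (hnc s)
  have (s : G ⧸ H) : ((K s).map H.subtype).FiniteIndex := ⟨by
    rw [index_map_subtype]
    exact mul_ne_zero FiniteIndex.index_ne_zero FiniteIndex.index_ne_zero⟩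
  have : (⨅ s, (K s).map H.subtype).FiniteIndex := finiteIndex_iInf this
  refine ⟨(⨅ s, (K s).map H.subtype).normalCore, inferInstance, fun g hg => ?_⟩
  set s := (g : G ⧸ H)
  set r := s.out
  have hh : r⁻¹ * g ∈ H := QuotientGroup.eq.1 (QuotientGroup.out_eq' _)
  have hmem := normalCore_le _ (normalCore_normal _ |>.conj_mem _ hg r⁻¹)
  obtain ⟨k, hk, hkeq⟩ := mem_map.1 (iInf_le (fun s => (K s).map H.subtype) s hmem)
  have hk' : k = (⟨r⁻¹ * g, hh⟩ * ⟨u, hu⟩ * ⟨r⁻¹ * g, hh⟩⁻¹)⁻¹ * ⟨_, hws s⟩ := by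
    apply Subtype.ext
    rw [← subtype_apply, hkeq]
    simp only [coe_mul, coe_inv, r]
    group
  exact hKuw _ _ (hk' ▸ hk)

end ConjSeparable

section Centralizer

variable {G : Type*} [Group G]

def Subgroup.subgroupOfCentralizerEquiv (H : Subgroup G) {c : G} (hc : c ∈ H) :
    H.subgroupOf (centralizer {c}) ≃* centralizer {(⟨c, hc⟩ : H)} where
  toFun u := ⟨⟨u, u.2⟩,
    mem_centralizer_singleton_iff.2 (Subtype.ext (mem_centralizer_singleton_iff.1 u.1.2))⟩
  invFun u := ⟨⟨u, mem_centralizer_singleton_iff.2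
    (congrArg Subtype.val (mem_centralizer_singleton_iff.1 u.2))⟩, u.1.2⟩
  map_mul' _ _ := rfl

theorem commute_of_mem_centralizer (htf : ∀ g : G, g ≠ 1 → ¬IsOfFinOrder g)
    (hnd : ∀ φ : GenDihedral →* G, ¬Function.Injective φ) (H : Subgroup G) [H.FiniteIndex]
    (hcent : ∀ h : H, h ≠ 1 → ∃ n : ℕ, n ≤ 2 ∧
      Nonempty (centralizer ({h} : Set H) ≃* Multiplicative (Fin n → ℤ)))
    {c : G} (hc : c ∈ H) (hc1 : c ≠ 1) {u v : G}
    (hu : u ∈ centralizer {c}) (hv : v ∈ centralizer {c}) : Commute u v := by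
  obtain ⟨n, hn, ⟨ψ⟩⟩ := hcent ⟨c, hc⟩ (fun h => hc1 (congrArg Subtype.val h))
  have hcomm := commute_of_finiteIndex_mulEquiv ((centralizer {c}).isTorsionFree htf)
    (fun φ hφ => hnd ((centralizer {c}).subtype.comp φ) (Subtype.val_injective.comp hφ)) hn
    (H.subgroupOf (centralizer {c})) ((H.subgroupOfCentralizerEquiv hc).trans ψ)
    ⟨u, hu⟩ ⟨v, hv⟩
  exact hcomm.map (centralizer {c}).subtype

/-- If `x ^ n = y ^ n`, then `x` and `y` centralize a common power lying in `H`, so commute. -/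
theorem isMulTorsionFree_of_finiteIndex (htf : ∀ g : G, g ≠ 1 → ¬IsOfFinOrder g)
    (hnd : ∀ φ : GenDihedral →* G, ¬Function.Injective φ) (H : Subgroup G) [H.FiniteIndex]
    (hcent : ∀ h : H, h ≠ 1 → ∃ n : ℕ, n ≤ 2 ∧
      Nonempty (centralizer ({h} : Set H) ≃* Multiplicative (Fin n → ℤ))) :
    IsMulTorsionFree G := by
  refine ⟨fun n hn x y (hxy : x ^ n = y ^ n) => ?_⟩
  set e := H.normalCore.index
  have hne : n * e ≠ 0 := mul_ne_zero hn FiniteIndex.index_ne_zero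
  have hyx : y ^ (n * e) = x ^ (n * e) := by rw [pow_mul, pow_mul, hxy]
  by_cases hc1 : x ^ (n * e) = 1
  · rw [eq_one_of_pow_eq_one htf hne hc1, eq_one_of_pow_eq_one htf hne (hyx.trans hc1)]
  have hc : x ^ (n * e) ∈ H := H.normalCore_le (by rw [pow_mul]; exact pow_index_mem _ _)
  have hcomm := commute_of_mem_centralizer htf hnd H hcent hc hc1
    (mem_centralizer_singleton_iff.2 (Commute.self_pow x _).eq)
    (mem_centralizer_singleton_iff.2 (hyx ▸ (Commute.self_pow y _).eq))
  refine mul_inv_eq_one.1 (eq_one_of_pow_eq_one htf hn ?_)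
  rw [(hcomm.inv_right).mul_pow, inv_pow, hxy, mul_inv_cancel]

end Centralizer

theorem isConj_of_isConj_pow {G : Type*} [Group G] [IsMulTorsionFree G] {x y : G} {n : ℕ}
    (hn : n ≠ 0) (h : IsConj (x ^ n) (y ^ n)) : IsConj x y := by
  obtain ⟨c, hc⟩ := isConj_iff.1 h
  exact isConj_iff.2 ⟨c, pow_left_injective hn (by simp only [conj_pow, hc])⟩

/-- let `G` be a torsion-free group with no subgroup isomorphic to
the generalized dihedral group, and `H ≤ G` of finite index such that `H` is
conjugacy separable and the centralizer in `H` of every nontrivial element is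
free abelian of rank at most `2`.  Then `G` is conjugacy separable. -/
theorem conjSeparable_of_finiteIndex_subgroup (G : Type) [Group G]
    (htf : ∀ g : G, g ≠ 1 → ¬IsOfFinOrder g)
    (hnd : ∀ φ : GenDihedral →* G, ¬ Function.Injective φ)
    (H : Subgroup G) (hfi : H.FiniteIndex)
    (hcs : ConjSeparable H)
    (hcent : ∀ h : H, h ≠ 1 →
      ∃ n : ℕ, n ≤ 2 ∧
        Nonempty (Subgroup.centralizer ({h} : Set H) ≃* Multiplicative (Fin n → ℤ))) :
    ConjSeparable G := by
  have := isMulTorsionFree_of_finiteIndex htf hnd H hcent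
  intro x y hxy
  have he : H.normalCore.index ≠ 0 := FiniteIndex.index_ne_zero
  obtain ⟨K, hK, hKxy⟩ := hcs.exists_finiteIndex_not_mem_of_finiteIndex
    (H.normalCore_le (pow_index_mem _ x)) (pow_index_mem _ y)
    (fun h => hxy (isConj_of_isConj_pow he h))
  obtain ⟨Q, hQ, hQfin, φ, hφ⟩ := exists_hom_not_isConj_of_finiteIndex K hKxy
  exact ⟨Q, hQ, hQfin, φ, fun h => hφ (by simpa only [map_pow] using h.pow _)⟩
end

section
/- The presented group K = ⟨a, s, m ∣ a² = s³ = m³ = (am)² = (sm²)³ = 1⟩ is isomorphic to the amalgamated free product S₃ ∗_{ℤ/3ℤ} D(3,3,3); precisely, K is isomorphic to the pushout (amalgamated product) of the two homomorphisms from the cyclic group of order 3 sending a fixed generator to m in P₁ = ⟨a, m ∣ a² = m³ = (am)² = 1⟩ and to m̄ in P₂ = ⟨s, m̄ ∣ s³ = m̄³ = (s m̄⁻¹)³ = 1⟩. -/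
/-- `K = ⟨a, s, m ∣ a² = s³ = m³ = (am)² = (sm²)³ = 1⟩`
(generators: `0 ↦ a`, `1 ↦ s`, `2 ↦ m`). -/
abbrev Kgrp : Type :=
  PresentedGroup
    ({FreeGroup.of (0 : Fin 3) ^ 2, FreeGroup.of (1 : Fin 3) ^ 3,
      FreeGroup.of (2 : Fin 3) ^ 3,
      (FreeGroup.of (0 : Fin 3) * FreeGroup.of (2 : Fin 3)) ^ 2,
      (FreeGroup.of (1 : Fin 3) * FreeGroup.of (2 : Fin 3) ^ 2) ^ 3} :
        Set (FreeGroup (Fin 3)))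

/-- `P₁ = ⟨a, m ∣ a² = m³ = (am)² = 1⟩ ≅ S₃` (generators: `0 ↦ a`, `1 ↦ m`). -/
abbrev P1 : Type :=
  PresentedGroup
    ({FreeGroup.of (0 : Fin 2) ^ 2, FreeGroup.of (1 : Fin 2) ^ 3,
      (FreeGroup.of (0 : Fin 2) * FreeGroup.of (1 : Fin 2)) ^ 2} :
        Set (FreeGroup (Fin 2)))

/-- `P₂ = ⟨s, m̄ ∣ s³ = m̄³ = (s m̄⁻¹)³ = 1⟩ ≅ D(3,3,3)`
(generators: `0 ↦ s`, `1 ↦ m̄`). -/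
abbrev P2 : Type :=
  PresentedGroup
    ({FreeGroup.of (0 : Fin 2) ^ 3, FreeGroup.of (1 : Fin 2) ^ 3,
      (FreeGroup.of (0 : Fin 2) * (FreeGroup.of (1 : Fin 2))⁻¹) ^ 3} :
        Set (FreeGroup (Fin 2)))

/-- The two vertex groups of the amalgam, indexed by `Bool`. -/
def Fam : Bool → Type
  | true => P1
  | false => P2

instance (b : Bool) : Group (Fam b) := by
  cases b
  · exact inferInstanceAs (Group P2)
  · exact inferInstanceAs (Group P1)

/-- The cyclic group of order 3. -/
abbrev C3 : Type := Multiplicative (ZMod 3)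

/-! The presentation of `K` is the union of those of `P₁` (on `a, m`) and `P₂` (on `s, m̄`)
with `m` and `m̄` identified, except that the relator `(s m̄⁻¹)³` of `P₂` appears as `(s m²)³`;
the two agree because `m³ = 1`. So sending generators to generators respects the relations in
both directions, and the two resulting homomorphisms are mutually inverse, being so on
generators. -/

section ZModLift

variable {n : ℕ} {G : Type*} [Group G]

def zmodLift (g : G) (hg : g ^ n = 1) : Multiplicative (ZMod n) →* G :=
  AddMonoidHom.toMultiplicativeLeft <| ZMod.lift n
    ⟨zmultiplesHom (Additive G) (Additive.ofMul g), by simp [← ofMul_pow, hg]⟩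

@[simp]
theorem zmodLift_ofAdd_one (g : G) (hg : g ^ n = 1) :
    zmodLift g hg (Multiplicative.ofAdd 1) = g := by
  have h1 : ((1 : ℤ) : ZMod n) = 1 := Int.cast_one
  simp only [zmodLift, AddMonoidHom.coe_toMultiplicativeLeft, Function.comp_apply, toAdd_ofAdd]
  rw [← h1, ZMod.lift_coe]
  simp

theorem MonoidHom.ext_zmod_ofAdd_one {φ ψ : Multiplicative (ZMod n) →* G}
    (h : φ (Multiplicative.ofAdd 1) = ψ (Multiplicative.ofAdd 1)) : φ = ψ := by
  refine MonoidHom.ext fun x => ?_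
  obtain ⟨k, hk⟩ := ZMod.intCast_surjective x.toAdd
  have hx : x = Multiplicative.ofAdd 1 ^ k := by simp [← ofAdd_zsmul, hk]
  rw [hx, map_zpow, map_zpow, h]

end ZModLift

theorem sq_eq_inv_of_pow_three_eq_one {G : Type*} [Group G] {y : G} (hy : y ^ 3 = 1) :
    y ^ 2 = y⁻¹ :=
  eq_inv_of_mul_eq_one_left (by rwa [← pow_succ])

namespace P1

abbrev a : P1 := PresentedGroup.of 0
abbrev m : P1 := PresentedGroup.of 1

theorem a_pow_two : a ^ 2 = 1 := PresentedGroup.one_of_mem (by simp)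
theorem m_pow_three : m ^ 3 = 1 := PresentedGroup.one_of_mem (by simp)
theorem a_mul_m_pow_two : (a * m) ^ 2 = 1 := PresentedGroup.one_of_mem (by simp)

end P1

namespace P2

abbrev s : P2 := PresentedGroup.of 0
abbrev mbar : P2 := PresentedGroup.of 1

theorem s_pow_three : s ^ 3 = 1 := PresentedGroup.one_of_mem (by simp)
theorem mbar_pow_three : mbar ^ 3 = 1 := PresentedGroup.one_of_mem (by simp)
theorem s_mul_mbar_inv_pow_three : (s * mbar⁻¹) ^ 3 = 1 := PresentedGroup.one_of_mem (by simp)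

theorem s_mul_mbar_sq_pow_three : (s * mbar ^ 2) ^ 3 = 1 := by
  rw [sq_eq_inv_of_pow_three_eq_one mbar_pow_three, s_mul_mbar_inv_pow_three]

end P2

namespace Kgrp

abbrev a : Kgrp := PresentedGroup.of 0
abbrev s : Kgrp := PresentedGroup.of 1
abbrev m : Kgrp := PresentedGroup.of 2

theorem a_pow_two : a ^ 2 = 1 := PresentedGroup.one_of_mem (by simp)
theorem s_pow_three : s ^ 3 = 1 := PresentedGroup.one_of_mem (by simp)
theorem m_pow_three : m ^ 3 = 1 := PresentedGroup.one_of_mem (by simp)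
theorem a_mul_m_pow_two : (a * m) ^ 2 = 1 := PresentedGroup.one_of_mem (by simp)
theorem s_mul_m_sq_pow_three : (s * m ^ 2) ^ 3 = 1 := PresentedGroup.one_of_mem (by simp)

theorem s_mul_m_inv_pow_three : (s * m⁻¹) ^ 3 = 1 := by
  rw [← sq_eq_inv_of_pow_three_eq_one m_pow_three, s_mul_m_sq_pow_three]

end Kgrp

def amalgamMaps : ∀ b, C3 →* Fam b
  | true => zmodLift P1.m P1.m_pow_three
  | false => zmodLift P2.mbar P2.mbar_pow_three

theorem amalgamMaps_true : amalgamMaps true (.ofAdd 1) = P1.m :=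
  zmodLift_ofAdd_one _ P1.m_pow_three

theorem amalgamMaps_false : amalgamMaps false (.ofAdd 1) = P2.mbar :=
  zmodLift_ofAdd_one _ P2.mbar_pow_three

abbrev Amalgam : Type := Monoid.PushoutI amalgamMaps

namespace Amalgam

-- `of true` is typed on `Fam true`; restated on `P1`, `map_pow` and co. see `P1`'s group law.
def inl : P1 →* Amalgam := Monoid.PushoutI.of (φ := amalgamMaps) true
def inr : P2 →* Amalgam := Monoid.PushoutI.of (φ := amalgamMaps) false

theorem inl_m_eq_inr_mbar : inl P1.m = inr P2.mbar := by
  have h := (Monoid.PushoutI.of_apply_eq_base amalgamMaps true (.ofAdd 1)).trans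
    (Monoid.PushoutI.of_apply_eq_base amalgamMaps false (.ofAdd 1)).symm
  rwa [amalgamMaps_true, amalgamMaps_false] at h

end Amalgam

open Amalgam in
def Kgrp.toAmalgam : Kgrp →* Amalgam :=
  PresentedGroup.toGroup (f := ![inl P1.a, inr P2.s, inl P1.m]) <| by
    rintro r (rfl | rfl | rfl | rfl | rfl) <;>
      simp only [map_pow, map_mul, FreeGroup.lift_apply_of, Matrix.cons_val_zero,
        Matrix.cons_val_one, Matrix.cons_val_two, Matrix.head_cons, Matrix.tail_cons]
    · rw [← map_pow, P1.a_pow_two, map_one]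
    · rw [← map_pow, P2.s_pow_three, map_one]
    · rw [← map_pow, P1.m_pow_three, map_one]
    · rw [← map_mul, ← map_pow, P1.a_mul_m_pow_two, map_one]
    · rw [inl_m_eq_inr_mbar, ← map_pow, ← map_mul, ← map_pow, P2.s_mul_mbar_sq_pow_three,
        map_one]

def P1.toKgrp : P1 →* Kgrp :=
  PresentedGroup.toGroup (f := ![Kgrp.a, Kgrp.m]) <| by
    rintro r (rfl | rfl | rfl) <;>
      simp only [map_pow, map_mul, FreeGroup.lift_apply_of, Matrix.cons_val_zero,
        Matrix.cons_val_one]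
    exacts [Kgrp.a_pow_two, Kgrp.m_pow_three, Kgrp.a_mul_m_pow_two]

def P2.toKgrp : P2 →* Kgrp :=
  PresentedGroup.toGroup (f := ![Kgrp.s, Kgrp.m]) <| by
    rintro r (rfl | rfl | rfl) <;>
      simp only [map_pow, map_mul, map_inv, FreeGroup.lift_apply_of, Matrix.cons_val_zero,
        Matrix.cons_val_one]
    exacts [Kgrp.s_pow_three, Kgrp.m_pow_three, Kgrp.s_mul_m_inv_pow_three]

namespace Amalgam

def toKgrpFam : ∀ b, Fam b →* Kgrp
  | true => P1.toKgrp
  | false => P2.toKgrp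

theorem toKgrpFam_comp_amalgamMaps (b : Bool) :
    (toKgrpFam b).comp (amalgamMaps b) = zmodLift Kgrp.m Kgrp.m_pow_three := by
  refine MonoidHom.ext_zmod_ofAdd_one ?_
  cases b
  · show P2.toKgrp (amalgamMaps false (.ofAdd 1)) = _
    simp [amalgamMaps_false, P2.toKgrp]
  · show P1.toKgrp (amalgamMaps true (.ofAdd 1)) = _
    simp [amalgamMaps_true, P1.toKgrp]

def toKgrp : Amalgam →* Kgrp :=
  Monoid.PushoutI.lift toKgrpFam _ toKgrpFam_comp_amalgamMaps

theorem toKgrp_inl (x : P1) : toKgrp (inl x) = P1.toKgrp x :=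
  Monoid.PushoutI.lift_of toKgrpFam _ toKgrpFam_comp_amalgamMaps (i := true) x

theorem toKgrp_inr (x : P2) : toKgrp (inr x) = P2.toKgrp x :=
  Monoid.PushoutI.lift_of toKgrpFam _ toKgrpFam_comp_amalgamMaps (i := false) x

theorem toKgrp_comp_toAmalgam : toKgrp.comp Kgrp.toAmalgam = MonoidHom.id Kgrp :=
  PresentedGroup.ext fun i => by
    fin_cases i <;> simp [Kgrp.toAmalgam, toKgrp_inl, toKgrp_inr, P1.toKgrp, P2.toKgrp]

theorem toAmalgam_comp_P1_toKgrp : Kgrp.toAmalgam.comp P1.toKgrp = inl :=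
  PresentedGroup.ext fun i => by fin_cases i <;> simp [Kgrp.toAmalgam, P1.toKgrp]

theorem toAmalgam_comp_P2_toKgrp : Kgrp.toAmalgam.comp P2.toKgrp = inr :=
  PresentedGroup.ext fun i => by
    fin_cases i <;> simp [Kgrp.toAmalgam, P2.toKgrp, inl_m_eq_inr_mbar]

theorem toAmalgam_comp_toKgrp : Kgrp.toAmalgam.comp toKgrp = MonoidHom.id Amalgam :=
  Monoid.PushoutI.hom_ext_nonempty fun
    | true => MonoidHom.ext fun x => (congrArg Kgrp.toAmalgam (toKgrp_inl x)).trans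
        (DFunLike.congr_fun toAmalgam_comp_P1_toKgrp x)
    | false => MonoidHom.ext fun x => (congrArg Kgrp.toAmalgam (toKgrp_inr x)).trans
        (DFunLike.congr_fun toAmalgam_comp_P2_toKgrp x)

end Amalgam

def Kgrp.equivAmalgam : Kgrp ≃* Amalgam :=
  MonoidHom.toMulEquiv toAmalgam Amalgam.toKgrp Amalgam.toKgrp_comp_toAmalgam
    Amalgam.toAmalgam_comp_toKgrp

/-- `K ≅ S₃ ∗_{ℤ/3ℤ} D(3,3,3)`: `K` is isomorphic to the pushout
(amalgamated free product) of the two homomorphisms from the cyclic group of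
order 3 sending a fixed generator to `m ∈ P₁` and to `m̄ ∈ P₂`. -/
theorem Kgrp_iso_amalgam :
    ∃ f : ∀ b : Bool, C3 →* Fam b,
      (f true (Multiplicative.ofAdd (1 : ZMod 3)) =
        (PresentedGroup.of (1 : Fin 2) : P1)) ∧
      (f false (Multiplicative.ofAdd (1 : ZMod 3)) =
        (PresentedGroup.of (1 : Fin 2) : P2)) ∧
      Nonempty (Kgrp ≃* Monoid.PushoutI f) :=
  ⟨amalgamMaps, amalgamMaps_true, amalgamMaps_false, ⟨Kgrp.equivAmalgam⟩⟩
end
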